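/- arXiv:2309.07101 — 7 statements merged into one kernel-verified Lean document; each statement's English description precedes it below -/
import Mathlib

section
/- Let X be a Hausdorff, locally compact, σ-compact, connected, locally connected space and let K ⊆ X be compact. Then X \ K has only finitely many connected components whose closure in X is noncompact. -/
open Set

/-- An *end* of a topological space `X`: a function assigning to each compact `K ⊆ X`
a connected component of `X \ K`, monotone under inclusion of compact sets. -/
structure SpaceEnd (X : Type*) [TopologicalSpace X] where
  part : ∀ K : Set X, IsCompact K → Set X
  part_mem : ∀ (K : Set X) (hK : IsCompact K), ∃ x ∈ Kᶜ, part K hK = connectedComponentIn Kᶜ x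
  part_mono : ∀ (K₁ K₂ : Set X) (h₁ : IsCompact K₁) (h₂ : IsCompact K₂),
    K₁ ⊆ K₂ → part K₂ h₂ ⊆ part K₁ h₁

/-- The complement of a compact set has only finitely many unbounded components. -/
theorem stmt3 (X : Type*) [TopologicalSpace X] [T2Space X] [LocallyCompactSpace X]
    [SigmaCompactSpace X] [ConnectedSpace X] [LocallyConnectedSpace X]
    (K : Set X) (hK : IsCompact K) :
    {C : Set X | (∃ x ∈ Kᶜ, C = connectedComponentIn Kᶜ x) ∧
      ¬ IsCompact (closure C)}.Finite := by
  obtain ⟨x₀⟩ : Nonempty X := inferInstance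
  obtain ⟨L, hLc, hKL⟩ := exists_compact_superset (hK.union isCompact_singleton)
  have hLcl : IsClosed L := hLc.isClosed
  set F := frontier L with hFdef
  have hFL : F ⊆ L := by
    rw [hFdef, hLcl.frontier_eq]; exact diff_subset
  have hFc : IsCompact F := hLc.of_isClosed_subset isClosed_frontier hFL
  have hFK : F ⊆ Kᶜ := by
    intro y hy hyK
    rw [hFdef, hLcl.frontier_eq] at hy
    exact hy.2 (hKL (Or.inl hyK))
  have hopen : ∀ x : X, IsOpen (connectedComponentIn Kᶜ x) :=
    fun x => hK.isClosed.isOpen_compl.connectedComponentIn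
  have hcov : F ⊆ ⋃ x ∈ F, connectedComponentIn Kᶜ x :=
    fun y hy => mem_biUnion hy (mem_connectedComponentIn (hFK hy))
  obtain ⟨t, htF, htfin, htcov⟩ := hFc.elim_finite_subcover_image (fun x _ => hopen x) hcov
  apply (htfin.image (fun x => connectedComponentIn Kᶜ x)).subset
  rintro C ⟨⟨x, hx, rfl⟩, hnc⟩
  have hCconn : IsConnected (connectedComponentIn Kᶜ x) :=
    isConnected_connectedComponentIn_iff.2 hx
  -- The component meets the interior of L.
  have hmeets : (connectedComponentIn Kᶜ x ∩ interior L).Nonempty := by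
    by_cases hclK : (closure (connectedComponentIn Kᶜ x) ∩ K).Nonempty
    · obtain ⟨y, hy1, hy2⟩ := hclK
      have hyi : y ∈ interior L := hKL (Or.inl hy2)
      obtain ⟨z, hz1, hz2⟩ := (_root_.mem_closure_iff.1 hy1) _ isOpen_interior hyi
      exact ⟨z, hz2, hz1⟩
    · -- then the closure of the component avoids K, so the component is clopen, hence all of X
      rw [not_nonempty_iff_eq_empty] at hclK
      have hsub : closure (connectedComponentIn Kᶜ x) ⊆ Kᶜ := fun y hy hyK =>
        eq_empty_iff_forall_notMem.1 hclK y ⟨hy, hyK⟩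
      have hcl : closure (connectedComponentIn Kᶜ x) ⊆ connectedComponentIn Kᶜ x :=
        hCconn.isPreconnected.closure.subset_connectedComponentIn
          (subset_closure (mem_connectedComponentIn hx)) hsub
      have hclosed : IsClosed (connectedComponentIn Kᶜ x) :=
        isClosed_of_closure_subset hcl
      have huniv : connectedComponentIn Kᶜ x = univ :=
        IsClopen.eq_univ ⟨hclosed, hopen x⟩ ⟨x, mem_connectedComponentIn hx⟩
      exact ⟨x₀, by rw [huniv]; trivial, hKL (Or.inr rfl)⟩
  -- The component is not contained in L.
  have hnotL : ¬ connectedComponentIn Kᶜ x ⊆ L := fun h =>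
    hnc (hLc.of_isClosed_subset isClosed_closure (closure_minimal h hLcl))
  -- Hence it meets the frontier of L.
  have hfront : (connectedComponentIn Kᶜ x ∩ F).Nonempty := by
    by_contra h
    rw [not_nonempty_iff_eq_empty] at h
    have hsub : connectedComponentIn Kᶜ x ⊆ interior L ∪ Lᶜ := by
      intro y hy
      by_cases hyL : y ∈ L
      · left
        by_contra hyi
        have hyF : y ∈ F := by rw [hFdef, hLcl.frontier_eq]; exact ⟨hyL, hyi⟩
        exact eq_empty_iff_forall_notMem.1 h y ⟨hy, hyF⟩
      · exact Or.inr hyL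
    rcases hCconn.isPreconnected.subset_or_subset isOpen_interior hLcl.isOpen_compl
        (disjoint_compl_right.mono_left interior_subset) hsub with h1 | h2
    · exact hnotL (h1.trans interior_subset)
    · obtain ⟨y, hy1, hy2⟩ := hmeets
      exact h2 hy1 (interior_subset hy2)
  obtain ⟨y, hyC, hyF⟩ := hfront
  have hxy : connectedComponentIn Kᶜ x = connectedComponentIn Kᶜ y := connectedComponentIn_eq hyC
  obtain ⟨z, hzt, hzy⟩ := mem_iUnion₂.1 (htcov hyF)
  exact ⟨z, hzt, ((connectedComponentIn_eq hzy).trans hxy.symm)⟩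
end

section
/- Let X be a Hausdorff, locally compact, σ-compact, connected, locally connected space, K ⊆ X compact, and let A be the union of all connected components of X \ K with compact closure. Then K ∪ A is compact. -/
open Set

/-- `K` together with all bounded components of `X \ K` is compact. -/
theorem stmt4 (X : Type*) [TopologicalSpace X] [T2Space X] [LocallyCompactSpace X]
    [SigmaCompactSpace X] [ConnectedSpace X] [LocallyConnectedSpace X]
    (K : Set X) (hK : IsCompact K) :
    IsCompact (K ∪ ⋃₀ {C : Set X | (∃ x ∈ Kᶜ, C = connectedComponentIn Kᶜ x) ∧
      IsCompact (closure C)}) := by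
  classical
  set S : Set (Set X) := {C : Set X | (∃ x ∈ Kᶜ, C = connectedComponentIn Kᶜ x) ∧
      IsCompact (closure C)} with hS
  set A : Set X := ⋃₀ S with hA
  have hKopen : IsOpen Kᶜ := hK.isClosed.isOpen_compl
  -- Components of `Kᶜ` are open
  have hcomp_open : ∀ x : X, IsOpen (connectedComponentIn Kᶜ x) :=
    fun x => hKopen.connectedComponentIn
  -- `K ∪ A` is closed
  have hclosed : IsClosed (K ∪ A) := by
    rw [← isOpen_compl_iff]
    rw [isOpen_iff_forall_mem_open]
    intro y hy
    simp only [mem_compl_iff, mem_union, not_or] at hy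
    refine ⟨connectedComponentIn Kᶜ y, ?_, hcomp_open y, mem_connectedComponentIn hy.1⟩
    intro z hz
    simp only [mem_compl_iff, mem_union, not_or]
    have hzK : z ∈ Kᶜ := connectedComponentIn_subset _ _ hz
    refine ⟨hzK, fun hzA => ?_⟩
    obtain ⟨C, hCS, hzC⟩ := hzA
    obtain ⟨⟨x₀, hx₀, hCeq⟩, hCc⟩ := hCS
    -- z's component equals C and equals y's component, so y ∈ A
    have h1 : connectedComponentIn Kᶜ x₀ = connectedComponentIn Kᶜ z :=
      connectedComponentIn_eq (hCeq ▸ hzC)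
    have h2 : connectedComponentIn Kᶜ y = connectedComponentIn Kᶜ z :=
      connectedComponentIn_eq hz
    apply hy.2
    refine ⟨C, ⟨⟨x₀, hx₀, hCeq⟩, hCc⟩, ?_⟩
    rw [hCeq, h1, ← h2]
    exact mem_connectedComponentIn hy.1
  -- Case: some bounded component is all of `X`
  by_cases huniv : (univ : Set X) ∈ S
  · haveI : CompactSpace X := by
      refine ⟨?_⟩
      simpa using huniv.2
    exact hclosed.isCompact
  -- Main case: take compact `L` with `K ⊆ interior L`
  obtain ⟨L, hL, hKL⟩ := exists_compact_superset hK
  have hLclosed : IsClosed L := hL.isClosed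
  have hfrK : frontier L ⊆ Kᶜ := by
    intro x hx
    intro hxK
    exact hx.2 (hKL hxK)
  have hfr_compact : IsCompact (frontier L) :=
    hL.of_isClosed_subset isClosed_frontier
      (frontier_subset_closure.trans hLclosed.closure_subset)
  -- every bounded component is `⊆ L` or meets `frontier L`
  have key : ∀ C ∈ S, C ⊆ L ∨ (C ∩ frontier L).Nonempty := by
    intro C hCS
    obtain ⟨⟨x₀, hx₀, hCeq⟩, hCc⟩ := hCS
    by_cases hmeet : (C ∩ frontier L).Nonempty
    · exact Or.inr hmeet
    · -- C disjoint from frontier L; C connected, so C ⊆ interior L or C ⊆ (closure L)ᶜ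
      have hconn : IsPreconnected C := by
        rw [hCeq]; exact (isConnected_connectedComponentIn_iff.mpr hx₀).isPreconnected
      have hCsub : C ⊆ interior L ∪ (closure L)ᶜ := by
        intro z hz
        by_cases h1 : z ∈ closure L
        · left
          by_contra h2
          exact hmeet ⟨z, hz, h1, h2⟩
        · exact Or.inr h1
      have hdisj : Disjoint (interior L) ((closure L)ᶜ) :=
        disjoint_compl_right.mono interior_subset_closure le_rfl
      rcases hconn.subset_or_subset isOpen_interior
          isClosed_closure.isOpen_compl hdisj hCsub with h | h
      · exact Or.inl (h.trans interior_subset)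
      · -- C ⊆ (closure L)ᶜ : then C is clopen, hence univ, contradiction with huniv
        exfalso
        -- closure C ⊆ C ∪ K
        have hclC : closure C ⊆ C ∪ K := by
          intro y hy
          by_cases hyK : y ∈ K
          · exact Or.inr hyK
          left
          have hyKc : y ∈ Kᶜ := hyK
          obtain ⟨z, hz1, hz2⟩ := mem_closure_iff.mp hy _ (hcomp_open y)
            (mem_connectedComponentIn hyKc)
          have e1 : connectedComponentIn Kᶜ y = connectedComponentIn Kᶜ z :=
            connectedComponentIn_eq hz1
          have e2 : connectedComponentIn Kᶜ x₀ = connectedComponentIn Kᶜ z :=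
            connectedComponentIn_eq (hCeq ▸ hz2)
          rw [hCeq, e2, ← e1]
          exact mem_connectedComponentIn hyKc
        -- but closure C is disjoint from interior L ⊇ K
        have hdisj2 : closure C ∩ interior L = ∅ := by
          apply eq_empty_of_forall_notMem
          intro y ⟨hy1, hy2⟩
          have : y ∉ closure ((closure L)ᶜ) := by
            rw [closure_compl]
            simp only [mem_compl_iff, not_not]
            exact interior_mono subset_closure hy2
          exact this (closure_mono h hy1)
        have hKdisj : closure C ∩ K = ∅ := by
          apply eq_empty_of_forall_notMem
          intro y ⟨hy1, hy2⟩
          rw [eq_empty_iff_forall_notMem] at hdisj2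
          exact hdisj2 y ⟨hy1, hKL hy2⟩
        have hCclosed : closure C ⊆ C := by
          intro y hy
          rcases hclC hy with h' | h'
          · exact h'
          · rw [eq_empty_iff_forall_notMem] at hKdisj
            exact absurd ⟨hy, h'⟩ (hKdisj y)
        have hclopen : IsClopen C := ⟨closure_subset_iff_isClosed.mp hCclosed, by
          rw [hCeq]; exact hcomp_open x₀⟩
        have hCne : C.Nonempty := ⟨x₀, hCeq ▸ mem_connectedComponentIn hx₀⟩
        have : C = univ := hclopen.eq_univ hCne
        exact huniv (this ▸ ⟨⟨x₀, hx₀, hCeq⟩, hCc⟩)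
  -- finite subcover of `frontier L` by components
  obtain ⟨t, ht⟩ := hfr_compact.elim_finite_subcover
    (fun i : ↥(frontier L) => connectedComponentIn Kᶜ (i : X))
    (fun i => hcomp_open _) (fun x hx => mem_iUnion.mpr ⟨⟨x, hx⟩,
      mem_connectedComponentIn (hfrK hx)⟩)
  set t' : Finset ↥(frontier L) :=
    t.filter (fun i => IsCompact (closure (connectedComponentIn Kᶜ (i : X)))) with ht'
  have hM : IsCompact (L ∪ ⋃ i ∈ t', closure (connectedComponentIn Kᶜ (i : X))) := by
    apply hL.union
    apply t'.isCompact_biUnion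
    intro i hi
    exact (Finset.mem_filter.mp hi).2
  apply hM.of_isClosed_subset hclosed
  rintro y (hy | hy)
  · exact Or.inl (interior_subset (hKL hy))
  obtain ⟨C, hCS, hyC⟩ := hy
  rcases key C hCS with h | ⟨z, hzC, hzfr⟩
  · exact Or.inl (h hyC)
  · obtain ⟨⟨x₀, hx₀, hCeq⟩, hCc⟩ := hCS
    obtain ⟨i, hit, hzi⟩ := mem_iUnion₂.mp (ht hzfr)
    have e1 : connectedComponentIn Kᶜ (i : X) = connectedComponentIn Kᶜ z :=
      connectedComponentIn_eq hzi
    have e2 : connectedComponentIn Kᶜ x₀ = connectedComponentIn Kᶜ z :=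
      connectedComponentIn_eq (hCeq ▸ hzC)
    have hCi : C = connectedComponentIn Kᶜ (i : X) := by rw [hCeq, e2, ← e1]
    right
    have hmem : i ∈ t' := by
      rw [ht', Finset.mem_filter]
      exact ⟨hit, hCi ▸ hCc⟩
    exact mem_biUnion hmem (subset_closure (hCi ▸ hyC))
end

section
/- Let X be a Hausdorff, locally compact, σ-compact, connected, locally connected space with compact exhaustion (Kᵢ). Then the set of ends of X is in bijection with the set of sequences (Vᵢ) where Vᵢ is a connected component of X \ Kᵢ and Vᵢ₊₁ ⊆ Vᵢ, via ε ↦ (ε(Kᵢ)). -/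
open Set

/-- Ends are in bijection with nested sequences of components of complements of a
compact exhaustion, via `ε ↦ (ε (Kᵢ))`. -/
theorem stmt6 (X : Type*) [TopologicalSpace X] [T2Space X] [LocallyCompactSpace X]
    [SigmaCompactSpace X] [ConnectedSpace X] [LocallyConnectedSpace X]
    (K : ℕ → Set X) (hcpt : ∀ i, IsCompact (K i)) (hmono : ∀ i, K i ⊆ K (i + 1))
    (hcov : (⋃ i, interior (K i)) = univ) :
    Function.Bijective (fun ε : SpaceEnd X =>
      (⟨fun i => ε.part (K i) (hcpt i),
        fun i => ε.part_mem (K i) (hcpt i),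
        fun i => ε.part_mono (K i) (K (i + 1)) (hcpt i) (hcpt (i + 1)) (hmono i)⟩ :
        {V : ℕ → Set X //
          (∀ i, ∃ x ∈ (K i)ᶜ, V i = connectedComponentIn (K i)ᶜ x) ∧
          (∀ i, V (i + 1) ⊆ V i)})) := by
  have hKm : Monotone K := monotone_nat_of_le_succ hmono
  have hex : ∀ C : Set X, IsCompact C → ∃ i, C ⊆ K i := by
    intro C hC
    obtain ⟨t, ht⟩ := hC.elim_finite_subcover (fun i => interior (K i))
      (fun i => isOpen_interior) (hcov ▸ subset_univ C)
    refine ⟨t.sup id, ht.trans ?_⟩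
    simp only [iUnion_subset_iff]
    intro i hi
    exact interior_subset.trans (hKm (Finset.le_sup (f := id) hi))
  constructor
  · -- injectivity
    intro ε ε' h
    have h' : ∀ i, ε.part (K i) (hcpt i) = ε'.part (K i) (hcpt i) := by
      intro i
      exact congrFun (congrArg Subtype.val h) i
    obtain ⟨p, pm, pmo⟩ := ε
    obtain ⟨p', pm', pmo'⟩ := ε'
    simp only at h' ⊢
    congr 1
    funext C hC
    obtain ⟨i, hi⟩ := hex C hC
    obtain ⟨x, hx, hxe⟩ := pm (K i) (hcpt i)
    have hxmem : x ∈ p (K i) (hcpt i) := hxe ▸ mem_connectedComponentIn hx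
    have h1 : x ∈ p C hC := pmo C (K i) hC (hcpt i) hi hxmem
    have h2 : x ∈ p' C hC := pmo' C (K i) hC (hcpt i) hi (h' i ▸ hxmem)
    obtain ⟨y, hy, hye⟩ := pm C hC
    obtain ⟨y', hy', hye'⟩ := pm' C hC
    rw [hye] at h1 ⊢
    rw [hye'] at h2 ⊢
    have e1 : connectedComponentIn Cᶜ y = connectedComponentIn Cᶜ x := connectedComponentIn_eq h1
    have e2 : connectedComponentIn Cᶜ y' = connectedComponentIn Cᶜ x := connectedComponentIn_eq h2
    rw [e1, e2]
  · -- surjectivity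
    rintro ⟨V, hV, hVsucc⟩
    have hVmono : ∀ i j, i ≤ j → V j ⊆ V i := fun i j hij =>
      antitone_nat_of_succ_le hVsucc hij
    have hV' := hV
    choose pt hptK hVeq using hV'
    have hptV : ∀ i, pt i ∈ V i := fun i => (hVeq i) ▸ mem_connectedComponentIn (hptK i)
    have hVsub : ∀ i, V i ⊆ (K i)ᶜ := fun i => (hVeq i) ▸ connectedComponentIn_subset _ _
    have hVconn : ∀ i, IsPreconnected (V i) := fun i =>
      (hVeq i) ▸ isPreconnected_connectedComponentIn
    -- index and base point for each compact set
    set idx : ∀ C : Set X, IsCompact C → ℕ := fun C hC => (hex C hC).choose with hidx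
    have hidxs : ∀ C hC, C ⊆ K (idx C hC) := fun C hC => (hex C hC).choose_spec
    set part : ∀ C : Set X, IsCompact C → Set X :=
      fun C hC => connectedComponentIn Cᶜ (pt (idx C hC)) with hpart
    have hptC : ∀ C hC, pt (idx C hC) ∈ Cᶜ := fun C hC =>
      fun hmem => (hptK (idx C hC)) (hidxs C hC hmem)
    -- key claim: if C ⊆ K i then V i ⊆ part C hC
    have claim : ∀ C hC i, C ⊆ K i → V i ⊆ part C hC := by
      intro C hC i hCi
      set j := idx C hC
      have hViC : V i ⊆ Cᶜ := (hVsub i).trans (compl_subset_compl.mpr hCi)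
      have hVjC : V j ⊆ Cᶜ := (hVsub j).trans (compl_subset_compl.mpr (hidxs C hC))
      obtain ⟨y, hyi, hyj⟩ : ∃ y, y ∈ V i ∧ y ∈ V j :=
        ⟨pt (max i j), hVmono i _ (le_max_left i j) (hptV _),
          hVmono j _ (le_max_right i j) (hptV _)⟩
      have hy' : y ∈ connectedComponentIn Cᶜ (pt j) :=
        (hVconn j).subset_connectedComponentIn (hptV j) hVjC hyj
      have : V i ⊆ connectedComponentIn Cᶜ y :=
        (hVconn i).subset_connectedComponentIn hyi hViC
      rw [← connectedComponentIn_eq hy'] at this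
      exact this
    refine ⟨⟨part, fun C hC => ⟨pt (idx C hC), hptC C hC, rfl⟩, ?_⟩, ?_⟩
    · -- monotonicity
      intro C₁ C₂ h₁ h₂ h12
      have step1 : part C₂ h₂ ⊆ connectedComponentIn C₁ᶜ (pt (idx C₂ h₂)) :=
        connectedComponentIn_mono _ (compl_subset_compl.mpr h12)
      have hmem : pt (idx C₂ h₂) ∈ connectedComponentIn C₁ᶜ (pt (idx C₁ h₁)) :=
        claim C₁ h₁ (idx C₂ h₂) (h12.trans (hidxs C₂ h₂)) (hptV _)
      exact step1.trans (connectedComponentIn_eq hmem).superset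
    · -- maps to the given sequence
      apply Subtype.ext
      funext i
      simp only
      have h1 : V i ⊆ part (K i) (hcpt i) := claim (K i) (hcpt i) i subset_rfl
      have h2 : pt i ∈ connectedComponentIn (K i)ᶜ (pt (idx (K i) (hcpt i))) := h1 (hptV i)
      show connectedComponentIn (K i)ᶜ (pt (idx (K i) (hcpt i))) = V i
      rw [hVeq i]
      exact connectedComponentIn_eq h2
end

section
/- Let X be a Hausdorff, locally compact, σ-compact, connected, locally connected space. If K ⊆ X is compact and V is a connected component of X \ K whose closure is noncompact, then there exists an end ε of X with ε(K) = V. -/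
open Set

section Aux

variable {X : Type*} [TopologicalSpace X]

/-- The closure of a connected component of the complement of a closed set stays inside
the component together with the closed set. -/
lemma aux_closure_subset {L : Set X} (hLc : IsClosed L) {y : X} (hy : y ∈ Lᶜ) :
    closure (connectedComponentIn Lᶜ y) ⊆ connectedComponentIn Lᶜ y ∪ L := by
  intro z hz
  by_cases hzL : z ∈ L
  · exact Or.inr hzL
  · left
    have hpre : IsPreconnected (insert z (connectedComponentIn Lᶜ y)) :=
      isPreconnected_connectedComponentIn.subset_closure (subset_insert _ _)
        (insert_subset hz subset_closure)
    have hsub : insert z (connectedComponentIn Lᶜ y) ⊆ Lᶜ :=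
      insert_subset hzL (connectedComponentIn_subset _ _)
    have hmem : y ∈ insert z (connectedComponentIn Lᶜ y) :=
      mem_insert_iff.mpr (Or.inr (mem_connectedComponentIn hy))
    have := hpre.subset_connectedComponentIn hmem hsub
    exact this (mem_insert z _)

/-- Two components of `Lᶜ` both belonging to an ultrafilter coincide. -/
lemma aux_uniq (𝒰 : Ultrafilter X) {L : Set X} {x y : X}
    (hx : connectedComponentIn Lᶜ x ∈ 𝒰) (hy : connectedComponentIn Lᶜ y ∈ 𝒰) :
    connectedComponentIn Lᶜ x = connectedComponentIn Lᶜ y := by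
  obtain ⟨z, hzx, hzy⟩ := Ultrafilter.nonempty_of_mem (Filter.inter_mem hx hy)
  rw [connectedComponentIn_eq hzx, connectedComponentIn_eq hzy]

/-- Key lemma: if an ultrafilter contains the complement of every compact set, then for every
compact `L` it contains some connected component of `Lᶜ`. -/
lemma aux_key [T2Space X] [LocallyCompactSpace X] [ConnectedSpace X] [LocallyConnectedSpace X]
    (𝒰 : Ultrafilter X) (h1 : ∀ L : Set X, IsCompact L → Lᶜ ∈ 𝒰)
    (L : Set X) (hL : IsCompact L) : ∃ x ∈ Lᶜ, connectedComponentIn Lᶜ x ∈ 𝒰 := by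
  have hne : Nonempty X := Filter.nonempty_of_neBot 𝒰.toFilter
  obtain ⟨x₀⟩ := hne
  obtain ⟨L', hL', hsub⟩ := exists_compact_superset (hL.insert x₀)
  have hLsub : L ⊆ interior L' := (subset_insert x₀ L).trans hsub
  have hL'c : IsClosed L' := hL'.isClosed
  have hLopen : IsOpen (Lᶜ : Set X) := hL.isClosed.isOpen_compl
  have hXnc : ¬ IsCompact (univ : Set X) := by
    intro h
    have h2 := h1 univ h
    rw [compl_univ] at h2
    exact Ultrafilter.empty_notMem h2
  -- the frontier of L' is nonempty
  have hfr_ne : (frontier L').Nonempty := by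
    rcases eq_empty_or_nonempty (frontier L') with h | h
    · have hcl : IsClopen L' := isClopen_iff_frontier_eq_empty.mpr h
      rcases isClopen_iff.mp hcl with h' | h'
      · have hx0 : x₀ ∈ L' := interior_subset (hsub (mem_insert x₀ L))
        rw [h'] at hx0
        exact absurd hx0 (notMem_empty x₀)
      · exact absurd (h' ▸ hL') hXnc
    · exact h
  have hfrLc : frontier L' ⊆ Lᶜ := by
    intro z hz hzL
    exact (hL'c.frontier_eq ▸ hz).2 (hLsub hzL)
  -- covering claim
  have hcov : ∀ y ∈ Lᶜ, y ∈ L' ∨ ∃ z ∈ frontier L', y ∈ connectedComponentIn Lᶜ z := by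
    intro y hy
    by_cases hyL' : y ∈ L'
    · exact Or.inl hyL'
    right
    set C := connectedComponentIn Lᶜ y with hCdef
    have hyC : y ∈ C := mem_connectedComponentIn hy
    have hCopen : IsOpen C := hLopen.connectedComponentIn
    have hclC : closure C ⊆ C ∪ L := aux_closure_subset hL.isClosed hy
    have hzex : (closure C ∩ frontier L').Nonempty := by
      by_cases hCL : (closure C ∩ L).Nonempty
      · by_contra hemp
        rw [not_nonempty_iff_eq_empty] at hemp
        have hdis : closure C ⊆ interior L' ∪ L'ᶜ := by
          intro w hw
          by_cases h1' : w ∈ L'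
          · by_cases h2' : w ∈ interior L'
            · exact Or.inl h2'
            · exfalso
              have hwf : w ∈ frontier L' := by
                rw [hL'c.frontier_eq]; exact ⟨h1', h2'⟩
              have hwm : w ∈ closure C ∩ frontier L' := ⟨hw, hwf⟩
              rw [hemp] at hwm
              exact hwm
          · exact Or.inr h1'
        obtain ⟨w, hwL⟩ := hCL
        have hpc : IsPreconnected (closure C) := isPreconnected_connectedComponentIn.closure
        obtain ⟨v, hv⟩ := hpc (interior L') (L'ᶜ) isOpen_interior hL'c.isOpen_compl hdis
          ⟨w, hwL.1, hLsub hwL.2⟩ ⟨y, subset_closure hyC, hyL'⟩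
        exact (hv.2.2 (interior_subset hv.2.1))
      · have hCcl : closure C ⊆ C := by
          intro z hz
          rcases hclC hz with h | h
          · exact h
          · exact absurd ⟨z, hz, h⟩ hCL
        have hclopen : IsClopen C := ⟨isClosed_of_closure_subset hCcl, hCopen⟩
        rcases isClopen_iff.mp hclopen with h | h
        · exact absurd (h ▸ hyC) (notMem_empty y)
        · obtain ⟨z, hz⟩ := hfr_ne
          exact ⟨z, subset_closure (by rw [h]; trivial), hz⟩
    obtain ⟨z, hzC, hzfr⟩ := hzex
    have hzC' : z ∈ C := by
      rcases hclC hzC with h | h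
      · exact h
      · exact absurd h (hfrLc hzfr)
    exact ⟨z, hzfr, (connectedComponentIn_eq hzC') ▸ hyC⟩
  -- finitely many components cover the frontier
  have hfr_cpt : IsCompact (frontier L') :=
    hL'.of_isClosed_subset isClosed_frontier
      (by rw [hL'c.frontier_eq]; exact diff_subset)
  have hfr_cov : frontier L' ⊆ ⋃ x ∈ frontier L', connectedComponentIn Lᶜ x := fun z hz =>
    mem_biUnion hz (mem_connectedComponentIn (hfrLc hz))
  obtain ⟨t, hts, htfin, htcov⟩ := hfr_cpt.elim_finite_subcover_image
    (fun x _ => hLopen.connectedComponentIn) hfr_cov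
  have hsub2 : Lᶜ ∩ L'ᶜ ⊆ ⋃ x ∈ t, connectedComponentIn Lᶜ x := by
    rintro y ⟨hy, hyL'⟩
    rcases hcov y hy with h | ⟨z, hzfr, hyz⟩
    · exact absurd h hyL'
    have hz2 := htcov hzfr
    rw [mem_iUnion₂] at hz2
    obtain ⟨x, hx, hzx⟩ := hz2
    refine mem_biUnion hx ?_
    rw [connectedComponentIn_eq hzx]
    exact hyz
  have hmem : (⋃ x ∈ t, connectedComponentIn Lᶜ x) ∈ 𝒰 :=
    Filter.mem_of_superset (Filter.inter_mem (h1 L hL) (h1 L' hL')) hsub2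
  obtain ⟨x, hxt, hxm⟩ := (Ultrafilter.finite_biUnion_mem_iff htfin).mp hmem
  exact ⟨x, hfrLc (hts hxt), hxm⟩

end Aux

/-- Every unbounded component of the complement of a compact set is realized by an end. -/
theorem stmt7 (X : Type*) [TopologicalSpace X] [T2Space X] [LocallyCompactSpace X]
    [SigmaCompactSpace X] [ConnectedSpace X] [LocallyConnectedSpace X]
    (K : Set X) (hK : IsCompact K) (V : Set X)
    (hV : ∃ x ∈ Kᶜ, V = connectedComponentIn Kᶜ x)
    (hnc : ¬ IsCompact (closure V)) :
    ∃ ε : SpaceEnd X, ε.part K hK = V := by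
  obtain ⟨x₀, hx₀, hVeq⟩ := hV
  -- the filter of cocompact neighborhoods of infinity inside V is nontrivial
  have hF : (Filter.cocompact X ⊓ Filter.principal V).NeBot := by
    rw [Filter.inf_principal_neBot_iff]
    intro U hU
    obtain ⟨L, hLc, hLU⟩ := Filter.mem_cocompact.mp hU
    by_contra hemp
    rw [not_nonempty_iff_eq_empty] at hemp
    have hVL : V ⊆ L := by
      intro v hv
      by_contra h
      exact absurd (⟨v, hLU h, hv⟩ : (U ∩ V).Nonempty) (by rw [hemp]; exact not_nonempty_empty)
    exact hnc (hLc.of_isClosed_subset isClosed_closure (hLc.isClosed.closure_subset_iff.mpr hVL))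
  set 𝒰 := Ultrafilter.of (Filter.cocompact X ⊓ Filter.principal V) with h𝒰
  have hle : (𝒰 : Filter X) ≤ Filter.cocompact X ⊓ Filter.principal V := Ultrafilter.of_le _
  have hVmem : V ∈ 𝒰 := hle (Filter.mem_inf_of_right (Filter.mem_principal_self V))
  have h1 : ∀ L : Set X, IsCompact L → Lᶜ ∈ 𝒰 := fun L hL =>
    hle (Filter.mem_inf_of_left hL.compl_mem_cocompact)
  refine ⟨⟨fun L hL => connectedComponentIn Lᶜ (aux_key 𝒰 h1 L hL).choose, ?_, ?_⟩, ?_⟩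
  · intro L hL
    exact ⟨(aux_key 𝒰 h1 L hL).choose, (aux_key 𝒰 h1 L hL).choose_spec.1, rfl⟩
  · intro L₁ L₂ h₁ h₂ hsub
    obtain ⟨hx₂, hm₂⟩ := (aux_key 𝒰 h1 L₂ h₂).choose_spec
    obtain ⟨hx₁, hm₁⟩ := (aux_key 𝒰 h1 L₁ h₁).choose_spec
    set x₂ := (aux_key 𝒰 h1 L₂ h₂).choose
    have hx₂' : x₂ ∈ (L₁ᶜ : Set X) := fun h => hx₂ (hsub h)
    have hsub' : connectedComponentIn L₂ᶜ x₂ ⊆ connectedComponentIn L₁ᶜ x₂ :=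
      isPreconnected_connectedComponentIn.subset_connectedComponentIn
        (mem_connectedComponentIn hx₂)
        ((connectedComponentIn_subset _ _).trans (compl_subset_compl.mpr hsub))
    have hm : connectedComponentIn L₁ᶜ x₂ ∈ 𝒰 := Filter.mem_of_superset hm₂ hsub'
    show connectedComponentIn L₂ᶜ (aux_key 𝒰 h1 L₂ h₂).choose ⊆
      connectedComponentIn L₁ᶜ (aux_key 𝒰 h1 L₁ h₁).choose
    rw [aux_uniq 𝒰 hm₁ hm]
    exact hsub'
  · have hVm : connectedComponentIn Kᶜ x₀ ∈ 𝒰 := hVeq ▸ hVmem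
    rw [hVeq]
    exact aux_uniq 𝒰 (aux_key 𝒰 h1 K hK).choose_spec.2 hVm
end

section
/- Let X be a Hausdorff, locally compact, σ-compact, connected, locally connected space. Then the cardinality of the set of ends of X is at most the cardinality of the continuum. -/
open Set

/-- A preconnected set meeting both `t` and its complement meets the frontier of `t`. -/
lemma preconn_inter_frontier_nonempty {X : Type*} [TopologicalSpace X] {s t : Set X}
    (hs : IsPreconnected s) (h1 : (s ∩ t).Nonempty) (h2 : (s \ t).Nonempty) :
    (s ∩ frontier t).Nonempty := by
  by_contra h
  rw [not_nonempty_iff_eq_empty] at h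
  have hsub : s ⊆ interior t ∪ (closure t)ᶜ := by
    intro x hx
    by_cases hc : x ∈ closure t
    · left
      by_contra hi
      exact (h ▸ (⟨hx, hc, hi⟩ : x ∈ s ∩ frontier t) : x ∈ (∅ : Set X))
    · right; exact hc
  rcases hs.subset_or_subset isOpen_interior isClosed_closure.isOpen_compl
      (disjoint_compl_right.mono_left interior_subset_closure) hsub with h' | h'
  · obtain ⟨x, hxs, hxt⟩ := h2
    exact hxt (interior_subset (h' hxs))
  · obtain ⟨x, hxs, hxt⟩ := h1
    exact h' hxs (subset_closure hxt)

/-- The number of ends is at most the continuum. -/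
theorem stmt9 (X : Type*) [TopologicalSpace X] [T2Space X] [LocallyCompactSpace X]
    [SigmaCompactSpace X] [ConnectedSpace X] [LocallyConnectedSpace X] :
    Cardinal.mk (SpaceEnd X) ≤ Cardinal.continuum := by
  classical
  set K : CompactExhaustion X := CompactExhaustion.choice X with hKdef
  set S : ℕ → Set (Set X) := fun n =>
    insert univ ((fun x => connectedComponentIn (K n)ᶜ x) '' frontier (K (n + 1))) with hSdef
  have hopenc : ∀ n : ℕ, IsOpen ((K n)ᶜ : Set X) :=
    fun n => (K.isCompact n).isClosed.isOpen_compl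
  have hfr : ∀ n : ℕ, frontier (K (n + 1)) ⊆ ((K n)ᶜ : Set X) := by
    intro n x hx hxK
    exact hx.2 (K.subset_interior_succ n hxK)
  -- each S n is finite
  have hSfin : ∀ n, (S n).Finite := by
    intro n
    apply Set.Finite.insert
    have hfrc : IsCompact (frontier (K (n + 1))) :=
      (K.isCompact (n + 1)).of_isClosed_subset isClosed_frontier
        (frontier_subset_closure.trans (K.isCompact (n + 1)).isClosed.closure_eq.subset)
    obtain ⟨t, htsub, htfin, hcov⟩ :=
      hfrc.elim_finite_subcover_image (b := frontier (K (n + 1)))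
        (c := fun x => connectedComponentIn (K n)ᶜ x)
        (fun x _ => (hopenc n).connectedComponentIn)
        (fun x hx => mem_iUnion₂.2 ⟨x, hx, mem_connectedComponentIn (hfr n hx)⟩)
    refine Set.Finite.subset (htfin.image (fun x => connectedComponentIn (K n)ᶜ x)) ?_
    rintro C ⟨x, hx, rfl⟩
    obtain ⟨y, hyt, hxy⟩ := mem_iUnion₂.1 (hcov hx)
    exact ⟨y, hyt, connectedComponentIn_eq hxy⟩
  -- each end's part at K n belongs to S n
  have hmem : ∀ (e : SpaceEnd X) (n : ℕ), e.part (K n) (K.isCompact n) ∈ S n := by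
    intro e n
    obtain ⟨x, hxc, hx⟩ := e.part_mem (K n) (K.isCompact n)
    have hCconn : IsPreconnected (e.part (K n) (K.isCompact n)) := by
      rw [hx]; exact isPreconnected_connectedComponentIn
    obtain ⟨y, hyc, hy⟩ := e.part_mem (K (n + 1)) (K.isCompact (n + 1))
    have hyC : y ∈ e.part (K n) (K.isCompact n) :=
      e.part_mono _ _ (K.isCompact n) (K.isCompact (n + 1)) (K.subset_succ n)
        (hy ▸ mem_connectedComponentIn hyc)
    by_cases hint : (e.part (K n) (K.isCompact n) ∩ K (n + 1)).Nonempty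
    · obtain ⟨z, hzC, hzf⟩ :=
        preconn_inter_frontier_nonempty hCconn hint ⟨y, hyC, hyc⟩
      refine Set.mem_insert_of_mem _ ⟨z, hzf, ?_⟩
      rw [hx] at hzC ⊢
      exact (connectedComponentIn_eq hzC).symm
    · -- the part avoids K (n+1); then it is clopen, hence equal to univ
      left
      have hCopen : IsOpen (e.part (K n) (K.isCompact n)) := by
        rw [hx]; exact (hopenc n).connectedComponentIn
      have hCdisj : e.part (K n) (K.isCompact n) ⊆ (K (n + 1))ᶜ :=
        fun z hz hz' => hint ⟨z, hz, hz'⟩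
      have hclos : closure (e.part (K n) (K.isCompact n)) ⊆ e.part (K n) (K.isCompact n) := by
        intro z hz
        have h1 : z ∈ closure ((K (n + 1))ᶜ : Set X) := closure_mono hCdisj hz
        rw [closure_compl] at h1
        have h3 : z ∈ ((K n)ᶜ : Set X) := fun h => h1 (K.subset_interior_succ n h)
        rw [hx] at hz ⊢
        have hins : IsPreconnected (insert z (connectedComponentIn (K n)ᶜ x)) :=
          isPreconnected_connectedComponentIn.subset_closure (subset_insert _ _)
            (insert_subset hz subset_closure)
        have hsubF : insert z (connectedComponentIn (K n)ᶜ x) ⊆ (K n)ᶜ :=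
          insert_subset h3 (connectedComponentIn_subset _ _)
        exact hins.subset_connectedComponentIn (mem_insert_of_mem _
          (mem_connectedComponentIn hxc)) hsubF (mem_insert _ _)
      have hclopen : IsClopen (e.part (K n) (K.isCompact n)) :=
        ⟨isClosed_of_closure_subset hclos, hCopen⟩
      exact hclopen.eq_univ ⟨x, hx ▸ mem_connectedComponentIn hxc⟩
  -- the injection
  let f : SpaceEnd X → ∀ n : ℕ, (S n : Set (Set X)) :=
    fun e n => ⟨e.part (K n) (K.isCompact n), hmem e n⟩
  have hf : Function.Injective f := by
    intro e₁ e₂ h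
    have hKn : ∀ n, e₁.part (K n) (K.isCompact n) = e₂.part (K n) (K.isCompact n) :=
      fun n => congrArg Subtype.val (congrFun h n)
    have hall : ∀ (L : Set X) (hL : IsCompact L), e₁.part L hL = e₂.part L hL := by
      intro L hL
      obtain ⟨n, hn⟩ := K.exists_superset_of_isCompact hL
      obtain ⟨y, hyc, hy⟩ := e₁.part_mem (K n) (K.isCompact n)
      have hy1 : y ∈ e₁.part (K n) (K.isCompact n) := hy ▸ mem_connectedComponentIn hyc
      have hy2 : y ∈ e₂.part (K n) (K.isCompact n) := hKn n ▸ hy1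
      have hyL1 : y ∈ e₁.part L hL := e₁.part_mono L (K n) hL (K.isCompact n) hn hy1
      have hyL2 : y ∈ e₂.part L hL := e₂.part_mono L (K n) hL (K.isCompact n) hn hy2
      obtain ⟨a, hac, ha⟩ := e₁.part_mem L hL
      obtain ⟨b, hbc, hb⟩ := e₂.part_mem L hL
      rw [ha] at hyL1 ⊢
      rw [hb] at hyL2 ⊢
      rw [connectedComponentIn_eq hyL1, connectedComponentIn_eq hyL2]
    cases e₁; cases e₂
    simp only [SpaceEnd.mk.injEq]
    funext L hL
    exact hall L hL
  calc Cardinal.mk (SpaceEnd X) ≤ Cardinal.mk (∀ n : ℕ, (S n : Set (Set X))) :=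
        Cardinal.mk_le_of_injective hf
    _ = Cardinal.prod (fun n : ℕ => Cardinal.mk (S n)) := Cardinal.mk_pi _
    _ ≤ Cardinal.prod (fun _ : ℕ => Cardinal.continuum) :=
        Cardinal.prod_le_prod _ _ (fun n =>
          ((hSfin n).lt_aleph0.le.trans Cardinal.aleph0_le_continuum))
    _ = Cardinal.continuum ^ (Cardinal.aleph0 : Cardinal) := by
        rw [Cardinal.prod_const, Cardinal.lift_continuum, Cardinal.mk_nat, Cardinal.lift_aleph0]
    _ = Cardinal.continuum := Cardinal.continuum_power_aleph0
end

section
/- Let X be a Hausdorff, locally compact, σ-compact, connected, locally connected space. The space of ends of X, topologized with basic open sets N(ε,K) = {β : β(K) = ε(K)} for compact K, is Hausdorff, compact, second-countable, and totally disconnected. -/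
open Set

/-- The topology on the set of ends, generated by the basic end-space neighborhoods
`N(ε,K) = {β : β(K) = ε(K)}`. -/
def endTopology (X : Type*) [TopologicalSpace X] : TopologicalSpace (SpaceEnd X) :=
  TopologicalSpace.generateFrom
    {S : Set (SpaceEnd X) | ∃ (ε : SpaceEnd X) (K : Set X) (hK : IsCompact K),
      S = {β : SpaceEnd X | β.part K hK = ε.part K hK}}

/-! Each component `ε(K)` of `X \ K` that is the value of an end leaves every compact
neighbourhood `L` of `K`, so unless it is clopen (hence all of `X`) it meets the compact set
`∂L`, which is covered by finitely many components of `X \ K`. Hence ends take only finitely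
many values on each stage `Kₙ` of a compact exhaustion, and the sets `N(ε, Kₙ)` form a countable
basis of clopen sets whose stage-`n` members partition the space of ends into finitely many
pieces. An ultrafilter picks one piece at every stage; these pieces are nested, and choosing for
each compact `K` the value at `K` of the ends in a piece of a stage `Kₙ ⊇ K` defines an end to
which the ultrafilter converges. -/

open Filter TopologicalSpace

theorem closure_connectedComponentIn_inter_subset {α : Type*} [TopologicalSpace α]
    (F : Set α) (x : α) : closure (connectedComponentIn F x) ∩ F ⊆ connectedComponentIn F x := by
  rintro y ⟨hy, hyF⟩
  have hxF : x ∈ F := by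
    by_contra hx
    rw [connectedComponentIn_eq_empty hx, closure_empty] at hy
    exact hy
  have hC : IsPreconnected (insert y (connectedComponentIn F x)) :=
    isPreconnected_connectedComponentIn.subset_closure (subset_insert _ _)
      (insert_subset hy subset_closure)
  exact hC.subset_connectedComponentIn (mem_insert_of_mem _ (mem_connectedComponentIn hxF))
    (insert_subset hyF (connectedComponentIn_subset _ _)) (mem_insert _ _)

namespace SpaceEnd

variable {X : Type*} [TopologicalSpace X]

theorem part_nonempty (ε : SpaceEnd X) (K : Set X) (hK : IsCompact K) :
    (ε.part K hK).Nonempty := by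
  obtain ⟨x, hx, h⟩ := ε.part_mem K hK
  exact ⟨x, h ▸ mem_connectedComponentIn hx⟩

theorem part_subset_compl (ε : SpaceEnd X) (K : Set X) (hK : IsCompact K) :
    ε.part K hK ⊆ Kᶜ := by
  obtain ⟨x, -, h⟩ := ε.part_mem K hK
  exact h ▸ connectedComponentIn_subset _ _

theorem part_eq_connectedComponentIn (ε : SpaceEnd X) {K : Set X} (hK : IsCompact K) {y : X}
    (hy : y ∈ ε.part K hK) : ε.part K hK = connectedComponentIn Kᶜ y := by
  obtain ⟨x, -, h⟩ := ε.part_mem K hK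
  rw [h] at hy ⊢
  exact connectedComponentIn_eq hy

theorem isPreconnected_part (ε : SpaceEnd X) (K : Set X) (hK : IsCompact K) :
    IsPreconnected (ε.part K hK) := by
  obtain ⟨x, -, h⟩ := ε.part_mem K hK
  exact h ▸ isPreconnected_connectedComponentIn

theorem part_eq_of_subset {β ε : SpaceEnd X} {K L : Set X} (hK : IsCompact K) (hL : IsCompact L)
    (hKL : K ⊆ L) (h : β.part L hL = ε.part L hL) : β.part K hK = ε.part K hK := by
  obtain ⟨y, hy⟩ := β.part_nonempty L hL
  rw [β.part_eq_connectedComponentIn hK (β.part_mono K L hK hL hKL hy),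
    ε.part_eq_connectedComponentIn hK (ε.part_mono K L hK hL hKL (h ▸ hy))]

section Finiteness

variable [T2Space X] [ConnectedSpace X] [LocallyConnectedSpace X]

theorem part_eq_univ_of_disjoint_frontier (ε : SpaceEnd X) {K L : Set X} (hK : IsCompact K)
    (hL : IsCompact L) (hKL : K ⊆ interior L) (h : Disjoint (ε.part K hK) (frontier L)) :
    ε.part K hK = univ := by
  obtain ⟨y, hy⟩ := ε.part_nonempty L hL
  have hyC : y ∈ ε.part K hK := ε.part_mono K L hK hL (hKL.trans interior_subset) hy
  have hyL : y ∈ interior Lᶜ :=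
    hL.isClosed.isOpen_compl.interior_eq.symm ▸ ε.part_subset_compl L hL hy
  have hCL : ε.part K hK ⊆ interior Lᶜ :=
    (ε.isPreconnected_part K hK).subset_right_of_subset_union isOpen_interior isOpen_interior
      (disjoint_compl_right.mono interior_subset interior_subset)
      (compl_frontier_eq_union_interior (s := L) ▸ h.subset_compl_right) ⟨y, hyC, hyL⟩
  have hclosure : closure (ε.part K hK) ⊆ Kᶜ := calc
    closure (ε.part K hK) ⊆ closure Lᶜ := closure_mono (hCL.trans interior_subset)
    _ = (interior L)ᶜ := closure_compl
    _ ⊆ Kᶜ := compl_subset_compl.2 hKL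
  have hclopen : IsClopen (ε.part K hK) := by
    rw [ε.part_eq_connectedComponentIn hK hyC] at hclosure ⊢
    exact ⟨isClosed_of_closure_subset fun z hz =>
        closure_connectedComponentIn_inter_subset _ _ ⟨hz, hclosure hz⟩,
      hK.isClosed.isOpen_compl.connectedComponentIn⟩
  exact hclopen.eq_univ ⟨y, hyC⟩

theorem finite_range_part [WeaklyLocallyCompactSpace X] {K : Set X} (hK : IsCompact K) :
    (range fun ε : SpaceEnd X => ε.part K hK).Finite := by
  obtain ⟨L, hL, hKL⟩ := exists_compact_superset hK
  have hLK : frontier L ⊆ Kᶜ := fun y hy hyK => hy.2 (hKL hyK)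
  obtain ⟨t, -, htfin, hcover⟩ :=
    (hL.of_isClosed_subset isClosed_frontier hL.isClosed.frontier_subset).elim_finite_subcover_image
      (fun z _ => hK.isClosed.isOpen_compl.connectedComponentIn)
      (fun z hz => mem_biUnion hz (mem_connectedComponentIn (hLK hz)))
  refine ((htfin.image (connectedComponentIn Kᶜ)).insert univ).subset ?_
  rintro _ ⟨ε, rfl⟩
  by_cases h : Disjoint (ε.part K hK) (frontier L)
  · exact Or.inl (ε.part_eq_univ_of_disjoint_frontier hK hL hKL h)
  · obtain ⟨y, hyC, hyL⟩ := not_disjoint_iff.1 h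
    obtain ⟨z, hzt, hyz⟩ := mem_iUnion₂.1 (hcover hyL)
    exact Or.inr ⟨z, hzt, (connectedComponentIn_eq hyz).trans
      (ε.part_eq_connectedComponentIn hK hyC).symm⟩

end Finiteness

def nbhd (ε : SpaceEnd X) (K : Set X) (hK : IsCompact K) : Set (SpaceEnd X) :=
  {β | β.part K hK = ε.part K hK}

theorem mem_nbhd {β ε : SpaceEnd X} {K : Set X} {hK : IsCompact K} :
    β ∈ nbhd ε K hK ↔ β.part K hK = ε.part K hK :=
  Iff.rfl

theorem mem_nbhd_self (ε : SpaceEnd X) (K : Set X) (hK : IsCompact K) : ε ∈ nbhd ε K hK :=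
  rfl

theorem nbhd_eq_of_mem {β ε : SpaceEnd X} {K : Set X} {hK : IsCompact K}
    (h : β ∈ nbhd ε K hK) : nbhd β K hK = nbhd ε K hK := by
  ext γ
  rw [mem_nbhd, mem_nbhd, mem_nbhd.1 h]

theorem nbhd_subset_nbhd (ε : SpaceEnd X) {K L : Set X} (hK : IsCompact K) (hL : IsCompact L)
    (hKL : K ⊆ L) : nbhd ε L hL ⊆ nbhd ε K hK :=
  fun _ => part_eq_of_subset hK hL hKL

theorem exists_notMem_nbhd {β ε : SpaceEnd X} (h : β ≠ ε) :
    ∃ (K : Set X) (hK : IsCompact K), β ∉ nbhd ε K hK := by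
  contrapose! h
  cases β
  cases ε
  congr
  funext K hK
  exact h K hK

attribute [local instance] endTopology

theorem isOpen_nbhd (ε : SpaceEnd X) (K : Set X) (hK : IsCompact K) : IsOpen (nbhd ε K hK) :=
  isOpen_generateFrom_of_mem ⟨ε, K, hK, rfl⟩

theorem isClopen_nbhd (ε : SpaceEnd X) (K : Set X) (hK : IsCompact K) :
    IsClopen (nbhd ε K hK) := by
  refine ⟨isOpen_compl_iff.1 (isOpen_iff_forall_mem_open.2 fun β hβ => ?_), isOpen_nbhd ε K hK⟩
  exact ⟨nbhd β K hK, fun γ hγ hγε => hβ ((mem_nbhd.1 hγ).symm.trans hγε),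
    isOpen_nbhd β K hK, mem_nbhd_self β K hK⟩

theorem isTopologicalBasis_nbhd :
    IsTopologicalBasis {S : Set (SpaceEnd X) | ∃ (ε : SpaceEnd X) (K : Set X) (hK : IsCompact K),
      S = nbhd ε K hK} where
  exists_subset_inter := by
    rintro _ ⟨ε₁, K₁, hK₁, rfl⟩ _ ⟨ε₂, K₂, hK₂, rfl⟩ β ⟨hβ₁, hβ₂⟩
    refine ⟨nbhd β (K₁ ∪ K₂) (hK₁.union hK₂), ⟨β, _, _, rfl⟩, mem_nbhd_self _ _ _, ?_⟩
    rw [← nbhd_eq_of_mem hβ₁, ← nbhd_eq_of_mem hβ₂]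
    exact subset_inter (nbhd_subset_nbhd β hK₁ _ subset_union_left)
      (nbhd_subset_nbhd β hK₂ _ subset_union_right)
  sUnion_eq := eq_univ_of_forall fun β => ⟨_, ⟨β, ∅, isCompact_empty, rfl⟩, mem_nbhd_self _ _ _⟩
  eq_generateFrom := rfl

theorem totallySeparatedSpace : TotallySeparatedSpace (SpaceEnd X) :=
  totallySeparatedSpace_iff_exists_isClopen.2 fun β ε h => by
    obtain ⟨K, hK, hK'⟩ := exists_notMem_nbhd (Ne.symm h)
    exact ⟨nbhd β K hK, isClopen_nbhd β K hK, mem_nbhd_self β K hK, hK'⟩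

section Exhaustion

variable (E : CompactExhaustion X)

abbrev cylinder (ε : SpaceEnd X) (n : ℕ) : Set (SpaceEnd X) :=
  nbhd ε (E n) (E.isCompact n)

theorem cylinder_subset_cylinder (ε : SpaceEnd X) {n m : ℕ} (h : n ≤ m) :
    cylinder E ε m ⊆ cylinder E ε n :=
  nbhd_subset_nbhd ε _ _ (E.subset h)

theorem iUnion_cylinder (n : ℕ) : ⋃ ε, cylinder E ε n = univ :=
  eq_univ_of_forall fun β => mem_iUnion.2 ⟨β, mem_nbhd_self _ _ _⟩

theorem finite_range_cylinder [T2Space X] [WeaklyLocallyCompactSpace X] [ConnectedSpace X]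
    [LocallyConnectedSpace X] (n : ℕ) : (range (cylinder E · n)).Finite :=
  ((finite_range_part (E.isCompact n)).image fun C => {β : SpaceEnd X | β.part (E n) (E.isCompact n) = C}).subset <| by
    rintro _ ⟨ε, rfl⟩
    exact ⟨_, ⟨ε, rfl⟩, rfl⟩

theorem isTopologicalBasis_cylinder : IsTopologicalBasis (⋃ n, range (cylinder E · n)) := by
  refine isTopologicalBasis_of_isOpen_of_nhds ?_ fun β u hβ hu => ?_
  · rintro _ ⟨_, ⟨n, rfl⟩, ε, rfl⟩
    exact isOpen_nbhd _ _ _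
  · obtain ⟨_, ⟨ε, K, hK, rfl⟩, hβK, hKu⟩ :=
      isTopologicalBasis_nbhd.exists_subset_of_mem_open hβ hu
    obtain ⟨n, hn⟩ := E.exists_superset_of_isCompact hK
    refine ⟨cylinder E β n, mem_iUnion.2 ⟨n, β, rfl⟩, mem_nbhd_self _ _ _, ?_⟩
    rw [← nbhd_eq_of_mem hβK] at hKu
    exact (nbhd_subset_nbhd β hK _ hn).trans hKu

theorem exists_forall_mem_cylinder (ε : ℕ → SpaceEnd X)
    (hε : ∀ {n m}, n ≤ m → ε m ∈ cylinder E (ε n) n) : ∃ ω, ∀ n, ω ∈ cylinder E (ε n) n := by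
  have hmono {K : Set X} (hK : IsCompact K) {n m : ℕ} (hnm : n ≤ m) (hKn : K ⊆ E n) :
      (ε m).part K hK = (ε n).part K hK :=
    part_eq_of_subset hK (E.isCompact n) hKn (hε hnm)
  have hpart {K : Set X} (hK : IsCompact K) {n m : ℕ} (hKn : K ⊆ E n) (hKm : K ⊆ E m) :
      (ε n).part K hK = (ε m).part K hK :=
    (hmono hK (le_max_left n m) hKn).symm.trans (hmono hK (le_max_right n m) hKm)
  choose N hN using fun K (hK : IsCompact K) => E.exists_superset_of_isCompact hK
  refine ⟨⟨fun K hK => (ε (N K hK)).part K hK, fun K hK => (ε _).part_mem K hK,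
    fun K₁ K₂ h₁ h₂ h₁₂ => ?_⟩, fun n => hpart _ (hN _ _) subset_rfl⟩
  have hK₂ : K₂ ⊆ E (max (N K₁ h₁) (N K₂ h₂)) := (hN K₂ h₂).trans (E.subset (le_max_right _ _))
  calc (ε (N K₂ h₂)).part K₂ h₂ = (ε (max (N K₁ h₁) (N K₂ h₂))).part K₂ h₂ :=
        hpart h₂ (hN K₂ h₂) hK₂
    _ ⊆ (ε (max (N K₁ h₁) (N K₂ h₂))).part K₁ h₁ := (ε _).part_mono K₁ K₂ h₁ h₂ h₁₂
    _ = (ε (N K₁ h₁)).part K₁ h₁ := hpart h₁ (h₁₂.trans hK₂) (hN K₁ h₁)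

end Exhaustion

variable [T2Space X] [WeaklyLocallyCompactSpace X] [SigmaCompactSpace X] [ConnectedSpace X]
  [LocallyConnectedSpace X]

theorem secondCountableTopology : SecondCountableTopology (SpaceEnd X) :=
  (isTopologicalBasis_cylinder (CompactExhaustion.choice X)).secondCountableTopology <|
    countable_iUnion fun n => (finite_range_cylinder _ n).countable

theorem compactSpace : CompactSpace (SpaceEnd X) := by
  let E := CompactExhaustion.choice X
  refine ⟨isCompact_iff_ultrafilter_le_nhds.2 fun f _ => ?_⟩
  have hpiece (n : ℕ) : ∃ ε, cylinder E ε n ∈ f := by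
    have hcover : ⋃₀ range (cylinder E · n) ∈ f := by
      rw [sUnion_range, iUnion_cylinder]
      exact univ_mem
    obtain ⟨_, ⟨ε, rfl⟩, hε⟩ :=
      (Ultrafilter.finite_sUnion_mem_iff (finite_range_cylinder E n)).1 hcover
    exact ⟨ε, hε⟩
  choose ε hε using hpiece
  have hnested {n m : ℕ} (hnm : n ≤ m) : ε m ∈ cylinder E (ε n) n := by
    obtain ⟨γ, hγm, hγn⟩ := f.nonempty_of_mem (inter_mem (hε m) (hε n))
    exact (mem_nbhd.1 (cylinder_subset_cylinder E _ hnm hγm)).symm.trans hγn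
  obtain ⟨ω, hω⟩ := exists_forall_mem_cylinder E ε hnested
  refine ⟨ω, trivial, (isTopologicalBasis_cylinder E).nhds_hasBasis.ge_iff.2 ?_⟩
  rintro _ ⟨hbasic, hωt⟩
  obtain ⟨n, δ, rfl⟩ := mem_iUnion.1 hbasic
  have hδ : cylinder E δ n = cylinder E (ε n) n :=
    (nbhd_eq_of_mem hωt).symm.trans (nbhd_eq_of_mem (hω n))
  exact (hδ ▸ hε n :)

end SpaceEnd

/-- The space of ends is Hausdorff, compact, second countable, and totally disconnected. -/
theorem stmt10 (X : Type*) [TopologicalSpace X] [T2Space X] [LocallyCompactSpace X]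
    [SigmaCompactSpace X] [ConnectedSpace X] [LocallyConnectedSpace X] :
    @T2Space (SpaceEnd X) (endTopology X) ∧
    @CompactSpace (SpaceEnd X) (endTopology X) ∧
    @SecondCountableTopology (SpaceEnd X) (endTopology X) ∧
    @TotallyDisconnectedSpace (SpaceEnd X) (endTopology X) := by
  let := endTopology X
  have := SpaceEnd.totallySeparatedSpace (X := X)
  exact ⟨inferInstance, SpaceEnd.compactSpace, SpaceEnd.secondCountableTopology, inferInstance⟩
end

section
/- Let f : X → Y be a proper continuous map between Hausdorff, locally compact, σ-compact, connected, locally connected spaces, and let ε be an end of X. Then there exists a unique end η of Y such that for every compact K ⊆ Y, f⁻¹(η(K)) ⊇ ε(f⁻¹(K)). -/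
open Set

/-- A proper continuous map induces a well-defined map on ends. -/
theorem stmt12 {X Y : Type*} [TopologicalSpace X] [T2Space X] [LocallyCompactSpace X]
    [SigmaCompactSpace X] [ConnectedSpace X] [LocallyConnectedSpace X]
    [TopologicalSpace Y] [T2Space Y] [LocallyCompactSpace Y]
    [SigmaCompactSpace Y] [ConnectedSpace Y] [LocallyConnectedSpace Y]
    (f : X → Y) (hf : Continuous f)
    (hprop : ∀ K : Set Y, IsCompact K → IsCompact (f ⁻¹' K))
    (ε : SpaceEnd X) :
    ∃! η : SpaceEnd Y, ∀ (K : Set Y) (hK : IsCompact K),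
      ε.part (f ⁻¹' K) (hprop K hK) ⊆ f ⁻¹' (η.part K hK) := by
  classical
  -- a chosen basepoint of ε.part (f ⁻¹' K)
  have hsel : ∀ (K : Set Y) (hK : IsCompact K),
      ∃ x, x ∈ ε.part (f ⁻¹' K) (hprop K hK) := by
    intro K hK
    obtain ⟨x, hx, hEq⟩ := ε.part_mem (f ⁻¹' K) (hprop K hK)
    exact ⟨x, hEq ▸ mem_connectedComponentIn hx⟩
  choose x₀ hx₀ using hsel
  -- ε.part is a preconnected subset of (f ⁻¹' K)ᶜ
  have hpre : ∀ (K : Set Y) (hK : IsCompact K),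
      IsPreconnected (ε.part (f ⁻¹' K) (hprop K hK)) ∧
      ε.part (f ⁻¹' K) (hprop K hK) ⊆ (f ⁻¹' K)ᶜ := by
    intro K hK
    obtain ⟨x, hx, hEq⟩ := ε.part_mem (f ⁻¹' K) (hprop K hK)
    rw [hEq]
    exact ⟨isPreconnected_connectedComponentIn, connectedComponentIn_subset _ _⟩
  -- the image f '' ε.part is preconnected, inside Kᶜ, containing f (x₀ K hK)
  have himg : ∀ (K : Set Y) (hK : IsCompact K),
      f '' (ε.part (f ⁻¹' K) (hprop K hK)) ⊆ connectedComponentIn Kᶜ (f (x₀ K hK)) := by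
    intro K hK
    refine ((hpre K hK).1.image f hf.continuousOn).subset_connectedComponentIn
      (mem_image_of_mem f (hx₀ K hK)) ?_
    rintro y ⟨z, hz, rfl⟩
    exact (hpre K hK).2 hz
  refine ⟨⟨fun K hK => connectedComponentIn Kᶜ (f (x₀ K hK)), ?_, ?_⟩, ?_, ?_⟩
  · intro K hK
    exact ⟨f (x₀ K hK), (hpre K hK).2 (hx₀ K hK), rfl⟩
  · -- monotonicity
    intro K₁ K₂ h₁ h₂ hsub
    have hx2 : x₀ K₂ h₂ ∈ ε.part (f ⁻¹' K₁) (hprop K₁ h₁) :=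
      ε.part_mono _ _ (hprop K₁ h₁) (hprop K₂ h₂) (preimage_mono hsub) (hx₀ K₂ h₂)
    have h2in : f (x₀ K₂ h₂) ∈ connectedComponentIn K₁ᶜ (f (x₀ K₁ h₁)) :=
      himg K₁ h₁ (mem_image_of_mem f hx2)
    calc connectedComponentIn K₂ᶜ (f (x₀ K₂ h₂))
        ⊆ connectedComponentIn K₁ᶜ (f (x₀ K₂ h₂)) :=
          connectedComponentIn_mono _ (compl_subset_compl.2 hsub)
      _ = connectedComponentIn K₁ᶜ (f (x₀ K₁ h₁)) := (connectedComponentIn_eq h2in).symm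
  · -- the defining property
    intro K hK z hz
    exact himg K hK (mem_image_of_mem f hz)
  · -- uniqueness
    intro η' hη'
    obtain ⟨part', mem', mono'⟩ := η'
    simp only [SpaceEnd.mk.injEq]
    funext K hK
    have hx : f (x₀ K hK) ∈ part' K hK := hη' K hK (hx₀ K hK)
    obtain ⟨y, hy, hEq⟩ := mem' K hK
    rw [hEq] at hx ⊢
    exact connectedComponentIn_eq hx
end
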